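/- arXiv:1906.05784 — 5 statements merged into one kernel-verified Lean document; each statement's English description precedes it below -/
import Mathlib

section
/- Let 𝒜 : V → V* decompose into symmetric part G and antisymmetric part B (so 𝒜 = G + B with G(v)(w) = G(w)(v) and B(v)(w) = −B(w)(v)). If G is positive definite, then V ⊕ V* = graph(G + B) ⊕ graph(−G + B). -/
namespace LinearMap

variable {R M N : Type*} [Ring R] [AddCommGroup M] [Module R M] [AddCommGroup N] [Module R N]

/-- `(v, w) = (a, f a) + (v - a, g (v - a))` is solved by `(f - g) a = w - g v`. -/
theorem isCompl_graph_of_bijective_sub (f g : M →ₗ[R] N) (h : Function.Bijective (f - g)) :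
    IsCompl (graph f) (graph g) := by
  constructor
  · rw [Submodule.disjoint_def]
    rintro ⟨v, w⟩ hf hg
    rw [mem_graph_iff] at hf hg
    have hv : v = 0 := h.1 <| by simp [← hf, ← hg]
    simp_all
  · rw [codisjoint_iff, eq_top_iff]
    rintro ⟨v, w⟩ -
    obtain ⟨a, ha⟩ := h.2 (w - g v)
    rw [sub_apply] at ha
    refine Submodule.mem_sup.mpr ⟨(a, f a), rfl, (v - a, g (v - a)), rfl, ?_⟩
    ext
    · exact add_sub_cancel a v
    · change f a + g (v - a) = w
      rw [map_sub]
      linear_combination (norm := module) ha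

end LinearMap

theorem Module.Dual.bijective_of_pos {K V : Type*} [Field K] [PartialOrder K] [AddCommGroup V]
    [Module K V] [FiniteDimensional K V] (G : V →ₗ[K] Module.Dual K V)
    (hpos : ∀ v : V, v ≠ 0 → 0 < G v v) : Function.Bijective G := by
  have hinj : Function.Injective G := by
    rw [← LinearMap.ker_eq_bot, Submodule.eq_bot_iff]
    intro v hv
    by_contra hv0
    simpa [LinearMap.mem_ker.mp hv] using hpos v hv0
  exact ⟨hinj, (LinearMap.injective_iff_surjective_of_finrank_eq_finrank
    Subspace.dual_finrank_eq.symm).mp hinj⟩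

theorem graphs_complementary_general
    (V : Type*) [AddCommGroup V] [Module ℝ V] [FiniteDimensional ℝ V]
    (G B : V →ₗ[ℝ] Module.Dual ℝ V)
    (hGpos : ∀ v : V, v ≠ 0 → 0 < G v v) :
    IsCompl (LinearMap.graph (G + B)) (LinearMap.graph (-G + B)) := by
  apply LinearMap.isCompl_graph_of_bijective_sub
  have hdiff : (G + B) - (-G + B) = (2 : ℝ) • G := by module
  rw [hdiff]
  exact Module.Dual.bijective_of_pos _ fun v hv ↦ by simpa using mul_pos two_pos (hGpos v hv)

/-- If `G : V → V*` is symmetric positive definite and `B : V → V*` is antisymmetric, then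
`V ⊕ V* = graph (G + B) ⊕ graph (-G + B)`. -/
theorem graphs_complementary
    (V : Type*) [AddCommGroup V] [Module ℝ V] [FiniteDimensional ℝ V]
    (G B : V →ₗ[ℝ] Module.Dual ℝ V)
    (hGsym : ∀ v w, G v w = G w v)
    (hGpos : ∀ v : V, v ≠ 0 → 0 < G v v)
    (hBanti : ∀ v w, B v w = -(B w v)) :
    IsCompl (LinearMap.graph (G + B)) (LinearMap.graph (-G + B)) :=
  graphs_complementary_general V G B hGpos
end

section
/- For G symmetric positive definite and B antisymmetric d×d real matrices, the generalized metric A = [[G − BG⁻¹B, −BG⁻¹],[G⁻¹B, G⁻¹]] is positive definite. -/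
open Matrix

/-- For `G` symmetric positive definite and `B` antisymmetric `d × d` real matrices, the
generalized metric `A = [[G - B G⁻¹ B, -B G⁻¹],[G⁻¹ B, G⁻¹]]` is positive definite. -/
theorem generalized_metric_posDef (d : ℕ)
    (G B : Matrix (Fin d) (Fin d) ℝ)
    (hGpd : G.PosDef) (hBanti : Bᵀ = -B)
    (A : Matrix (Fin d ⊕ Fin d) (Fin d ⊕ Fin d) ℝ)
    (hA : A = Matrix.fromBlocks (G - B * G⁻¹ * B) (-(B * G⁻¹)) (G⁻¹ * B) G⁻¹) :
    A.PosDef := by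
  haveI : Invertible G := hGpd.isUnit.invertible
  have hGi : (G⁻¹).PosDef := hGpd.inv
  haveI : Invertible (G⁻¹) := hGi.isUnit.invertible
  -- the lower-left block is the conjugate transpose of the upper-right block
  have hct : (-(B * G⁻¹))ᴴ = G⁻¹ * B := by
    have hG : G⁻¹ᴴ = G⁻¹ := hGi.isHermitian
    have hB : Bᴴ = -B := by
      rw [show Bᴴ = Bᵀ from rfl, hBanti]
    rw [conjTranspose_neg, conjTranspose_mul, hG, hB, Matrix.mul_neg, neg_neg]
  -- the Schur complement is G
  have hschur : (G - B * G⁻¹ * B) - (-(B * G⁻¹)) * (G⁻¹)⁻¹ * (-(B * G⁻¹))ᴴ = G := by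
    rw [hct, nonsing_inv_nonsing_inv G ((Matrix.isUnit_iff_isUnit_det G).mp hGpd.isUnit)]
    have h1 : B * G⁻¹ * G = B := by
      rw [Matrix.mul_assoc, Matrix.nonsing_inv_mul G ((Matrix.isUnit_iff_isUnit_det G).mp hGpd.isUnit), Matrix.mul_one]
    rw [Matrix.neg_mul, Matrix.neg_mul, h1, sub_neg_eq_add, Matrix.mul_assoc,
      sub_add_cancel]
  rw [hA, ← hct]
  rw [posDef_iff_dotProduct_mulVec]
  constructor
  · rw [IsHermitian.fromBlocks₂₂ _ _ hGi.isHermitian, hschur]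
    exact hGpd.isHermitian
  · intro x hx
    rw [dotProduct_mulVec, ← Sum.elim_comp_inl_inr x,
      schur_complement_eq₂₂ (G - B * G⁻¹ * B) (-(B * G⁻¹)) _ _ hGi.isHermitian, hschur]
    by_cases h1 : (x ∘ Sum.inl) = 0
    · have h2 : (x ∘ Sum.inr) ≠ 0 := by
        intro h2
        apply hx
        rw [← Sum.elim_comp_inl_inr x, h1, h2]
        ext (i | i) <;> rfl
      have hv : ((G⁻¹)⁻¹ * (-(B * G⁻¹))ᴴ) *ᵥ (x ∘ Sum.inl) + (x ∘ Sum.inr) = (x ∘ Sum.inr) := by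
        rw [h1, mulVec_zero, zero_add]
      rw [hv, h1]
      have := hGi.dotProduct_mulVec_pos h2
      rw [dotProduct_mulVec] at this
      simpa using this
    · have t1 : 0 < star (x ∘ Sum.inl) ᵥ* G ⬝ᵥ (x ∘ Sum.inl) := by
        have := hGpd.dotProduct_mulVec_pos h1
        rwa [dotProduct_mulVec] at this
      have t2 : 0 ≤ star (((G⁻¹)⁻¹ * (-(B * G⁻¹))ᴴ) *ᵥ (x ∘ Sum.inl) + (x ∘ Sum.inr)) ᵥ* G⁻¹ ⬝ᵥ
          (((G⁻¹)⁻¹ * (-(B * G⁻¹))ᴴ) *ᵥ (x ∘ Sum.inl) + (x ∘ Sum.inr)) := by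
        have := hGi.posSemidef.dotProduct_mulVec_nonneg (((G⁻¹)⁻¹ * (-(B * G⁻¹))ᴴ) *ᵥ (x ∘ Sum.inl) + (x ∘ Sum.inr))
        rwa [dotProduct_mulVec] at this
      linarith
end

section
/- Let A be a symmetric positive definite 2d×2d real matrix satisfying AᵀJA = J with J = [[0,I],[I,0]]. Then there exists an O(d,d) matrix 𝒪 (i.e. 𝒪ᵀJ𝒪 = J) such that A = 𝒪ᵀ𝒪. -/
open Matrix

/-!
Let `s = √a` be the positive square root. The relation `a J a = J` with `J² = 1` says that
`a⁻¹ = J a J`, and `J s J` is a positive square root of `J a J`, as is `s⁻¹` of `a⁻¹`. By uniqueness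
of positive square roots `s⁻¹ = J s J`, i.e. `s J s = J`: the symmetric matrix `𝒪 = s` is in
`O(d,d)` and `𝒪ᵀ 𝒪 = s² = a`.
-/

section Monoid

variable {M : Type*} [Monoid M] {a J : M}

theorem mul_conj_eq_one_of_mul_mul_eq (hJJ : J * J = 1) (h : a * J * a = J) :
    a * (J * a * J) = 1 := by
  rw [← mul_assoc, ← mul_assoc, h, hJJ]

theorem conj_mul_eq_one_of_mul_mul_eq (hJJ : J * J = 1) (h : a * J * a = J) :
    J * a * J * a = 1 := by
  simp only [mul_assoc] at h ⊢
  rw [h, hJJ]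

end Monoid

namespace CFC

variable {A : Type*} [PartialOrder A] [Ring A] [StarRing A] [TopologicalSpace A]
  [StarOrderedRing A] [Algebra ℝ A] [ContinuousFunctionalCalculus ℝ A IsSelfAdjoint]
  [NonnegSpectrumClass ℝ A] [IsSemitopologicalRing A] [T2Space A]
  {a J : A}

theorem sqrt_mul_conj_sqrt_eq_one (ha : 0 ≤ a) (hJ : IsSelfAdjoint J) (hJJ : J * J = 1)
    (h : a * J * a = J) : sqrt a * (J * sqrt a * J) = 1 := by
  have ha_unit : IsUnit a :=
    isUnit_iff_exists.2 ⟨J * a * J, mul_conj_eq_one_of_mul_mul_eq hJJ h,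
      conj_mul_eq_one_of_mul_mul_eq hJJ h⟩
  obtain ⟨u, hu⟩ := (isUnit_sqrt_iff a ha).2 ha_unit
  have hconj_nonneg : 0 ≤ J * sqrt a * J := by
    simpa only [hJ.star_eq] using star_left_conjugate_nonneg (sqrt_nonneg a) J
  have hinv_nonneg : 0 ≤ (↑u⁻¹ : A) := inv_nonneg_of_nonneg u (hu ▸ sqrt_nonneg a)
  have hsq : J * sqrt a * J * (J * sqrt a * J) = ↑u⁻¹ * ↑u⁻¹ := by
    have hconj_sq : J * sqrt a * J * (J * sqrt a * J) = J * a * J :=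
      calc J * sqrt a * J * (J * sqrt a * J) = J * (sqrt a * sqrt a) * J := by
            simp only [mul_assoc, ← mul_assoc J J, hJJ, one_mul]
        _ = J * a * J := by rw [sqrt_mul_sqrt_self a ha]
    rw [hconj_sq, ← Units.val_mul, ← _root_.mul_inv_rev]
    refine Units.eq_inv_of_mul_eq_one_left ?_
    rw [Units.val_mul, hu, sqrt_mul_sqrt_self a ha, mul_conj_eq_one_of_mul_mul_eq hJJ h]
  rw [(mul_self_eq_mul_self_iff _ _ hconj_nonneg hinv_nonneg).1 hsq, ← hu, Units.mul_inv]

theorem sqrt_mul_mul_sqrt_eq (ha : 0 ≤ a) (hJ : IsSelfAdjoint J) (hJJ : J * J = 1)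
    (h : a * J * a = J) : sqrt a * J * sqrt a = J := by
  calc sqrt a * J * sqrt a = sqrt a * (J * sqrt a * J) * J := by
        simp only [mul_assoc, hJJ, mul_one]
    _ = J := by rw [sqrt_mul_conj_sqrt_eq_one ha hJ hJJ h, one_mul]

end CFC

namespace Matrix

variable {m α : Type*} [DecidableEq m]

theorem fromBlocks_zero_one_one_zero_mul_self [Fintype m] [Semiring α] :
    (fromBlocks 0 1 1 0 : Matrix (m ⊕ m) (m ⊕ m) α) * fromBlocks 0 1 1 0 = 1 := by
  simp [fromBlocks_multiply, ← fromBlocks_one]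

theorem isSelfAdjoint_fromBlocks_zero_one_one_zero [Semiring α] [StarRing α] :
    IsSelfAdjoint (fromBlocks 0 1 1 0 : Matrix (m ⊕ m) (m ⊕ m) α) := by
  simp [IsSelfAdjoint, star_eq_conjTranspose, fromBlocks_conjTranspose]

end Matrix

theorem posdef_generalized_metric_orbit_general (d : ℕ)
    (J : Matrix (Fin d ⊕ Fin d) (Fin d ⊕ Fin d) ℝ)
    (hJ : J = Matrix.fromBlocks 0 1 1 0)
    (A : Matrix (Fin d ⊕ Fin d) (Fin d ⊕ Fin d) ℝ)
    (hApd : A.PosDef)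
    (hodd : Aᵀ * J * A = J) :
    ∃ O : Matrix (Fin d ⊕ Fin d) (Fin d ⊕ Fin d) ℝ, Oᵀ * J * O = J ∧ A = Oᵀ * O := by
  have hA_symm : Aᵀ = A := hApd.isHermitian
  rw [hA_symm] at hodd
  subst hJ
  obtain ⟨S, hS_symm, hSS, hSJS⟩ : ∃ S : Matrix (Fin d ⊕ Fin d) (Fin d ⊕ Fin d) ℝ,
      Sᵀ = S ∧ S * S = A ∧ S * fromBlocks 0 1 1 0 * S = fromBlocks 0 1 1 0 :=
    open scoped MatrixOrder in
    have hA : 0 ≤ A := hApd.posSemidef.nonneg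
    ⟨CFC.sqrt A, (CFC.sqrt_nonneg A).posSemidef.isHermitian, CFC.sqrt_mul_sqrt_self A hA,
      CFC.sqrt_mul_mul_sqrt_eq hA isSelfAdjoint_fromBlocks_zero_one_one_zero
        fromBlocks_zero_one_one_zero_mul_self hodd⟩
  exact ⟨S, by rw [hS_symm, hSJS], by rw [hS_symm, hSS]⟩

/-- A symmetric positive definite `2d × 2d` real matrix `A` with `Aᵀ * J * A = J`
(`J = [[0,I],[I,0]]`) lies in the orbit of the identity: there is an `O(d,d)` matrix `𝒪`
(`𝒪ᵀ * J * 𝒪 = J`) with `A = 𝒪ᵀ * 𝒪`. -/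
theorem posdef_generalized_metric_orbit (d : ℕ) (hd : 1 ≤ d)
    (J : Matrix (Fin d ⊕ Fin d) (Fin d ⊕ Fin d) ℝ)
    (hJ : J = Matrix.fromBlocks 0 1 1 0)
    (A : Matrix (Fin d ⊕ Fin d) (Fin d ⊕ Fin d) ℝ)
    (hAsym : Aᵀ = A) (hApd : A.PosDef)
    (hodd : Aᵀ * J * A = J) :
    ∃ O : Matrix (Fin d ⊕ Fin d) (Fin d ⊕ Fin d) ℝ, Oᵀ * J * O = J ∧ A = Oᵀ * O :=
  posdef_generalized_metric_orbit_general d J hJ A hApd hodd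
end

section
/- Let U be an involution on E = V ⊕ V* that is self-adjoint with respect to the canonical pairing, and define A(x,y) = ⟨Ux, y⟩. If A has signature (d+a, d−a) (dim V = d), then the canonical pairing restricted to the (+1)-eigenspace E₊ of U has signature (p, q) with p − q = a and p + q = dim E₊. -/
/-- A bilinear map `Φ` on a real module `E` has signature `(p, q)` if there is a basis of
`E` that is orthogonal for `Φ`, with `p` vectors of positive square and `q` of negative
square. -/
def HasSignature {E : Type*} [AddCommGroup E] [Module ℝ E]
    (Φ : E → E → ℝ) (p q : ℕ) : Prop :=
  ∃ b : Module.Basis (Fin p ⊕ Fin q) ℝ E,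
    (∀ i j, i ≠ j → Φ (b i) (b j) = 0) ∧
    (∀ i, 0 < Φ (b (Sum.inl i)) (b (Sum.inl i))) ∧
    (∀ j, Φ (b (Sum.inr j)) (b (Sum.inr j)) < 0)

namespace SigAux

open Module Submodule

variable {E : Type*} [AddCommGroup E] [Module ℝ E]

theorem hasSignature_congr {Φ Ψ : E → E → ℝ} (h : ∀ x y, Φ x y = Ψ x y)
    {p q : ℕ} (hΦ : HasSignature Φ p q) : HasSignature Ψ p q := by
  obtain ⟨b, h1, h2, h3⟩ := hΦ
  exact ⟨b, fun i j hij => (h _ _) ▸ h1 i j hij,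
    fun i => (h _ _) ▸ h2 i, fun j => (h _ _) ▸ h3 j⟩

theorem hasSignature_of_basis {ι κ : Type*} [Fintype ι] [Fintype κ]
    (Φ : E → E → ℝ) (b : Basis (ι ⊕ κ) ℝ E)
    (horth : ∀ i j, i ≠ j → Φ (b i) (b j) = 0)
    (hpos : ∀ i, 0 < Φ (b (Sum.inl i)) (b (Sum.inl i)))
    (hneg : ∀ j, Φ (b (Sum.inr j)) (b (Sum.inr j)) < 0) :
    HasSignature Φ (Fintype.card ι) (Fintype.card κ) := by
  let e : (ι ⊕ κ) ≃ (Fin (Fintype.card ι) ⊕ Fin (Fintype.card κ)) :=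
    Equiv.sumCongr (Fintype.equivFin ι) (Fintype.equivFin κ)
  have hsl : ∀ i, e.symm (Sum.inl i) = Sum.inl ((Fintype.equivFin ι).symm i) := fun i => rfl
  have hsr : ∀ j, e.symm (Sum.inr j) = Sum.inr ((Fintype.equivFin κ).symm j) := fun j => rfl
  refine ⟨b.reindex e, ?_, ?_, ?_⟩
  · intro i j hij
    rw [Basis.reindex_apply, Basis.reindex_apply]
    exact horth _ _ (e.symm.injective.ne hij)
  · intro i
    rw [Basis.reindex_apply, hsl]
    exact hpos _
  · intro j
    rw [Basis.reindex_apply, hsr]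
    exact hneg _

theorem apply_self_eq_sum {ι : Type*} [Fintype ι] [DecidableEq ι]
    (Φ : E →ₗ[ℝ] E →ₗ[ℝ] ℝ) (b : Basis ι ℝ E)
    (horth : ∀ i j, i ≠ j → Φ (b i) (b j) = 0) (x : E) :
    Φ x x = ∑ i, (b.repr x i)^2 * Φ (b i) (b i) := by
  have hx := (b.sum_repr x).symm
  calc Φ x x = Φ (∑ i, b.repr x i • b i) (∑ j, b.repr x j • b j) := by rw [← hx]
  _ = ∑ i, ∑ j, (b.repr x i * b.repr x j) * Φ (b j) (b i) := by
      simp only [map_sum, map_smul, LinearMap.coe_sum, Finset.sum_apply,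
        LinearMap.smul_apply, smul_eq_mul, Finset.mul_sum]
      refine Finset.sum_congr rfl fun i _ => Finset.sum_congr rfl fun j _ => by ring
  _ = ∑ i, (b.repr x i)^2 * Φ (b i) (b i) := by
      refine Finset.sum_congr rfl fun i _ => ?_
      rw [Finset.sum_eq_single i]
      · ring
      · intro j _ hj
        rw [horth j i hj, mul_zero]
      · intro h; exact absurd (Finset.mem_univ i) h

theorem pos_on_span {ι κ : Type*} [Fintype ι] [Fintype κ]
    (Φ : E →ₗ[ℝ] E →ₗ[ℝ] ℝ) (b : Basis (ι ⊕ κ) ℝ E)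
    (horth : ∀ i j, i ≠ j → Φ (b i) (b j) = 0)
    (hpos : ∀ i, 0 < Φ (b (Sum.inl i)) (b (Sum.inl i)))
    {x : E} (hx : x ∈ span ℝ (b '' Set.range Sum.inl)) (hx0 : x ≠ 0) :
    0 < Φ x x := by
  classical
  rw [Basis.mem_span_image] at hx
  have hzero : ∀ j, b.repr x (Sum.inr j) = 0 := by
    intro j
    by_contra h
    obtain ⟨i, hi⟩ := hx (Finsupp.mem_support_iff.2 h)
    exact Sum.inl_ne_inr hi
  rw [apply_self_eq_sum Φ b horth, Fintype.sum_sum_type]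
  have h2 : ∑ j, (b.repr x (Sum.inr j))^2 * Φ (b (Sum.inr j)) (b (Sum.inr j)) = 0 := by
    refine Finset.sum_eq_zero fun j _ => by rw [hzero j]; ring
  rw [h2, add_zero]
  apply Finset.sum_pos'
  · intro i _
    exact mul_nonneg (sq_nonneg _) (hpos i).le
  · have hr : b.repr x ≠ 0 := fun h => hx0 (b.repr.map_eq_zero_iff.mp h)
    obtain ⟨k, hk⟩ := Finsupp.ne_iff.1 hr
    simp only [Finsupp.coe_zero, Pi.zero_apply] at hk
    cases k with
    | inl i =>
        exact ⟨i, Finset.mem_univ i,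
          mul_pos (lt_of_le_of_ne (sq_nonneg _) (Ne.symm (pow_ne_zero 2 hk))) (hpos i)⟩
    | inr j => exact absurd (hzero j) hk

theorem nonpos_on_span {ι κ : Type*} [Fintype ι] [Fintype κ]
    (Φ : E →ₗ[ℝ] E →ₗ[ℝ] ℝ) (b : Basis (ι ⊕ κ) ℝ E)
    (horth : ∀ i j, i ≠ j → Φ (b i) (b j) = 0)
    (hneg : ∀ j, Φ (b (Sum.inr j)) (b (Sum.inr j)) < 0)
    {x : E} (hx : x ∈ span ℝ (b '' Set.range Sum.inr)) :
    Φ x x ≤ 0 := by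
  classical
  rw [Basis.mem_span_image] at hx
  have hzero : ∀ i, b.repr x (Sum.inl i) = 0 := by
    intro i
    by_contra h
    obtain ⟨j, hj⟩ := hx (Finsupp.mem_support_iff.2 h)
    exact Sum.inr_ne_inl hj
  rw [apply_self_eq_sum Φ b horth, Fintype.sum_sum_type]
  have h1 : ∑ i, (b.repr x (Sum.inl i))^2 * Φ (b (Sum.inl i)) (b (Sum.inl i)) = 0 := by
    refine Finset.sum_eq_zero fun i _ => by rw [hzero i]; ring
  rw [h1, zero_add]
  exact Finset.sum_nonpos fun j _ => mul_nonpos_of_nonneg_of_nonpos (sq_nonneg _) (hneg j).le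

theorem finrank_span_inl {ι κ : Type*} [Fintype ι] [Fintype κ] (b : Basis (ι ⊕ κ) ℝ E) :
    finrank ℝ (span ℝ (b '' Set.range Sum.inl)) = Fintype.card ι := by
  rw [show (b '' Set.range Sum.inl) = Set.range (b ∘ Sum.inl) from (Set.range_comp _ _).symm,
    finrank_span_eq_card (b.linearIndependent.comp Sum.inl Sum.inl_injective)]

theorem finrank_span_inr {ι κ : Type*} [Fintype ι] [Fintype κ] (b : Basis (ι ⊕ κ) ℝ E) :
    finrank ℝ (span ℝ (b '' Set.range Sum.inr)) = Fintype.card κ := by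
  rw [show (b '' Set.range Sum.inr) = Set.range (b ∘ Sum.inr) from (Set.range_comp _ _).symm,
    finrank_span_eq_card (b.linearIndependent.comp Sum.inr Sum.inr_injective)]

theorem pos_le (Φ : E →ₗ[ℝ] E →ₗ[ℝ] ℝ) {p q p' q' : ℕ}
    (h1 : HasSignature (fun x y => Φ x y) p q)
    (h2 : HasSignature (fun x y => Φ x y) p' q') : p ≤ p' := by
  obtain ⟨b, ho, hp, hn⟩ := h1
  obtain ⟨b', ho', hp', hn'⟩ := h2
  haveI : FiniteDimensional ℝ E := Module.Finite.of_basis b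
  set W := span ℝ (b '' Set.range Sum.inl) with hW
  set W' := span ℝ (b' '' Set.range Sum.inr) with hW'
  have hdisj : W ⊓ W' = ⊥ := by
    rw [eq_bot_iff]
    intro x hx
    rcases eq_or_ne x 0 with rfl | hx0
    · exact zero_mem _
    · exact absurd (pos_on_span Φ b ho hp hx.1 hx0) (not_lt.2 (nonpos_on_span Φ b' ho' hn' hx.2))
  have hsum := Submodule.finrank_sup_add_finrank_inf_eq W W'
  rw [hdisj] at hsum
  have hle : finrank ℝ (W ⊔ W' : Submodule ℝ E) ≤ finrank ℝ E := Submodule.finrank_le _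
  have hE : finrank ℝ E = p' + q' := by
    rw [finrank_eq_card_basis b']; simp
  have h1 : finrank ℝ W = p := by rw [hW, finrank_span_inl]; simp
  have h2 : finrank ℝ W' = q' := by rw [hW', finrank_span_inr]; simp
  simp only [finrank_bot, add_zero] at hsum
  omega

theorem sylvester (Φ : E →ₗ[ℝ] E →ₗ[ℝ] ℝ) {p q p' q' : ℕ}
    (h1 : HasSignature (fun x y => Φ x y) p q)
    (h2 : HasSignature (fun x y => Φ x y) p' q') : p = p' ∧ q = q' := by
  have hpp := le_antisymm (pos_le Φ h1 h2) (pos_le Φ h2 h1)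
  obtain ⟨b, -, -, -⟩ := h1
  obtain ⟨b', -, -, -⟩ := h2
  haveI : FiniteDimensional ℝ E := Module.Finite.of_basis b
  have hE1 : finrank ℝ E = p + q := by rw [finrank_eq_card_basis b]; simp
  have hE2 : finrank ℝ E = p' + q' := by rw [finrank_eq_card_basis b']; simp
  omega

theorem exists_signature [FiniteDimensional ℝ E] (Φ : LinearMap.BilinForm ℝ E)
    (hsymm : Φ.IsSymm) (hnd : ∀ x, (∀ y, Φ x y = 0) → x = 0) :
    ∃ p q : ℕ, HasSignature (fun x y => Φ x y) p q ∧ p + q = finrank ℝ E := by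
  classical
  obtain ⟨b, hb⟩ := LinearMap.BilinForm.exists_orthogonal_basis (LinearMap.BilinForm.isSymm_iff.mp hsymm)
  have hdiag : ∀ i, Φ (b i) (b i) ≠ 0 := by
    intro i h
    refine Basis.ne_zero b i (hnd (b i) fun y => ?_)
    have hy := (b.sum_repr y).symm
    rw [hy, map_sum]
    refine Finset.sum_eq_zero fun j _ => ?_
    rw [map_smul, smul_eq_mul]
    rcases eq_or_ne i j with rfl | hij
    · rw [h, mul_zero]
    · rw [hb hij, mul_zero]
  let P : Fin (finrank ℝ E) → Prop := fun i => 0 < Φ (b i) (b i)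
  let e : Fin (finrank ℝ E) ≃ ({i // P i} ⊕ {i // ¬ P i}) := (Equiv.sumCompl P).symm
  have key := hasSignature_of_basis (fun x y => Φ x y) (b.reindex e)
    (by
      intro i j hij
      rw [Basis.reindex_apply, Basis.reindex_apply]
      exact hb (e.symm.injective.ne hij))
    (by
      intro i
      rw [Basis.reindex_apply]
      have : e.symm (Sum.inl i) = i.1 := rfl
      rw [this]
      exact i.2)
    (by
      intro j
      rw [Basis.reindex_apply]
      have : e.symm (Sum.inr j) = j.1 := rfl
      rw [this]
      exact lt_of_le_of_ne (not_lt.1 j.2) (hdiag _))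
  refine ⟨_, _, key, ?_⟩
  rw [← Fintype.card_sum, Fintype.card_congr e.symm, Fintype.card_fin]

end SigAux


set_option maxHeartbeats 1000000

/-- Let `U` be an involution of `E = V × V*` self-adjoint for the canonical pairing, and
let `A (x, y) = ⟨U x, y⟩` have signature `(d + a, d - a)` where `d = dim V`.  Then the
canonical pairing restricted to the `(+1)`-eigenspace `E₊` of `U` has signature `(p, q)`
with `p - q = a` and `p + q = dim E₊`, and its restriction to the `(-1)`-eigenspace `E₋`
has signature `(d - p, d - q)`. -/
theorem signature_of_restricted_pairing
    (V : Type*) [AddCommGroup V] [Module ℝ V] [FiniteDimensional ℝ V]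
    (d a : ℕ) (hdim : Module.finrank ℝ V = d) (ha : a ≤ d)
    (pair : (V × Module.Dual ℝ V) → (V × Module.Dual ℝ V) → ℝ)
    (hpair : ∀ x y, pair x y = x.2 y.1 + y.2 x.1)
    (U : (V × Module.Dual ℝ V) →ₗ[ℝ] (V × Module.Dual ℝ V))
    (hinv : U ∘ₗ U = LinearMap.id)
    (hsa : ∀ x y, pair (U x) y = pair x (U y))
    (hsig : HasSignature (fun x y => pair (U x) y) (d + a) (d - a)) :
    ∃ p q : ℕ,
      HasSignature
        (fun x y : LinearMap.ker (U - LinearMap.id) => pair (x : V × Module.Dual ℝ V) y) p q ∧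
      (p : ℤ) - (q : ℤ) = (a : ℤ) ∧
      p + q = Module.finrank ℝ (LinearMap.ker (U - LinearMap.id)) ∧
      HasSignature
        (fun x y : LinearMap.ker (U + LinearMap.id) => pair (x : V × Module.Dual ℝ V) y)
        (d - p) (d - q) := by
  classical
  -- the canonical pairing as a bilinear form
  set P : LinearMap.BilinForm ℝ (V × Module.Dual ℝ V) :=
    LinearMap.mk₂ ℝ (fun x y => x.2 y.1 + y.2 x.1)
      (fun m₁ m₂ n => by simp; ring) (fun c m n => by simp; ring)
      (fun m n₁ n₂ => by simp; ring) (fun c m n => by simp; ring) with hPdef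
  have hP : ∀ x y, pair x y = P x y := fun x y => by rw [hpair]; rfl
  have hPapp : ∀ x y, P x y = x.2 y.1 + y.2 x.1 := fun x y => rfl
  have hPsymm : ∀ x y, P x y = P y x := fun x y => by rw [hPapp, hPapp]; ring
  have hU2 : ∀ x, U (U x) = x := fun x => by
    simpa using LinearMap.ext_iff.mp hinv x
  have hsaP : ∀ x y, P (U x) y = P x (U y) := fun x y => by
    rw [← hP, ← hP, hsa]
  set Ep := LinearMap.ker (U - LinearMap.id) with hEp
  set Em := LinearMap.ker (U + LinearMap.id) with hEm
  have memEp : ∀ x, x ∈ Ep ↔ U x = x := fun x => by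
    rw [hEp, LinearMap.mem_ker, LinearMap.sub_apply, LinearMap.id_apply, sub_eq_zero]
  have memEm : ∀ x, x ∈ Em ↔ U x = -x := fun x => by
    rw [hEm, LinearMap.mem_ker, LinearMap.add_apply, LinearMap.id_apply,
      add_eq_zero_iff_eq_neg]
  -- E = Ep ⊕ Em
  have hcompl : IsCompl Ep Em := by
    constructor
    · rw [Submodule.disjoint_def]
      intro x hx1 hx2
      rw [memEp] at hx1
      rw [memEm] at hx2
      have hxx : x = -x := hx1.symm.trans hx2
      have h2 : (2 : ℝ) • x = 0 := by
        rw [two_smul]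
        nth_rewrite 2 [hxx]
        abel
      rcases smul_eq_zero.mp h2 with h | h
      · norm_num at h
      · exact h
    · rw [codisjoint_iff, eq_top_iff]
      intro x _
      refine Submodule.mem_sup.2 ⟨(1/2 : ℝ) • (x + U x), ?_, (1/2 : ℝ) • (x - U x), ?_, ?_⟩
      · have hUx : U (x + U x) = x + U x := by rw [map_add, hU2, add_comm]
        rw [memEp, map_smul, hUx]
      · have hUx : U (x - U x) = -(x - U x) := by rw [map_sub, hU2, neg_sub]
        rw [memEm, map_smul, hUx, smul_neg]
      · rw [← smul_add]
        rw [show x + U x + (x - U x) = (2 : ℝ) • x by rw [two_smul]; abel]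
        rw [smul_smul]; norm_num
  -- orthogonality of the eigenspaces
  have horthPM : ∀ x ∈ Ep, ∀ y ∈ Em, P x y = 0 := by
    intro x hx y hy
    rw [memEp] at hx
    rw [memEm] at hy
    have : P x y = -P x y := by
      conv_lhs => rw [← hx]
      rw [hsaP, hy, map_neg]
    linarith
  -- nondegeneracy of P
  have hnd : ∀ x : V × Module.Dual ℝ V, (∀ y, P x y = 0) → x = 0 := by
    intro x hx
    have h1 : x.1 = 0 := by
      rw [← Module.forall_dual_apply_eq_zero_iff ℝ x.1]
      intro g
      have := hx (0, g)
      rw [hPapp] at this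
      simpa using this
    have h2 : x.2 = 0 := by
      ext w
      have := hx (w, 0)
      rw [hPapp] at this
      simpa using this
    exact Prod.ext h1 h2
  -- nondegeneracy of the restrictions
  have hsymmP : P.IsSymm := by
    refine ⟨fun x y => ?_⟩
    exact hPsymm x y
  have hndp : ∀ x : Ep, (∀ y : Ep, P.restrict Ep x y = 0) → x = 0 := by
    intro x hx
    refine Subtype.ext (hnd _ fun y => ?_)
    have hy : y ∈ Ep ⊔ Em := by rw [hcompl.sup_eq_top]; trivial
    obtain ⟨y1, hy1, y2, hy2, rfl⟩ := Submodule.mem_sup.1 hy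
    rw [map_add, horthPM x.1 x.2 y2 hy2, add_zero]
    exact hx ⟨y1, hy1⟩
  have hndm : ∀ x : Em, (∀ y : Em, P.restrict Em x y = 0) → x = 0 := by
    intro x hx
    refine Subtype.ext (hnd _ fun y => ?_)
    have hy : y ∈ Ep ⊔ Em := by rw [hcompl.sup_eq_top]; trivial
    obtain ⟨y1, hy1, y2, hy2, rfl⟩ := Submodule.mem_sup.1 hy
    rw [map_add, hPsymm x.1 y1, horthPM y1 hy1 x.1 x.2, zero_add]
    exact hx ⟨y2, hy2⟩
  have hsymmp : (P.restrict Ep).IsSymm := by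
    refine ⟨fun x y => ?_⟩
    rw [LinearMap.BilinForm.restrict_apply,
      LinearMap.BilinForm.restrict_apply]
    exact hPsymm x.1 y.1
  have hsymmm : (P.restrict Em).IsSymm := by
    refine ⟨fun x y => ?_⟩
    rw [LinearMap.BilinForm.restrict_apply,
      LinearMap.BilinForm.restrict_apply]
    exact hPsymm x.1 y.1
  haveI : FiniteDimensional ℝ (V × Module.Dual ℝ V) := inferInstance
  haveI : FiniteDimensional ℝ Ep := inferInstance
  haveI : FiniteDimensional ℝ Em := inferInstance
  obtain ⟨p, q, sigp, hpq⟩ := SigAux.exists_signature (E := ↥Ep) (P.restrict Ep) hsymmp hndp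
  obtain ⟨p', q', sigm, hpq'⟩ := SigAux.exists_signature (E := ↥Em) (P.restrict Em) hsymmm hndm
  obtain ⟨bp, hop, hpp, hnp⟩ := sigp
  obtain ⟨bm, hom, hpm, hnm⟩ := sigm
  -- the combined basis of E
  set bE : Module.Basis ((Fin p ⊕ Fin q) ⊕ (Fin p' ⊕ Fin q')) ℝ (V × Module.Dual ℝ V) :=
    (bp.prod bm).map (Submodule.prodEquivOfIsCompl _ _ hcompl) with hbEdef
  have hbEl : ∀ i, bE (Sum.inl i) = (bp i : V × Module.Dual ℝ V) := by
    intro i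
    rw [hbEdef, Module.Basis.map_apply]
    have h1 : (bp.prod bm) (Sum.inl i) = (bp i, 0) :=
      Prod.ext (Module.Basis.prod_apply_inl_fst _ _ _) (Module.Basis.prod_apply_inl_snd _ _ _)
    rw [h1, Submodule.coe_prodEquivOfIsCompl']
    simp
  have hbEr : ∀ j, bE (Sum.inr j) = (bm j : V × Module.Dual ℝ V) := by
    intro j
    rw [hbEdef, Module.Basis.map_apply]
    have h1 : (bp.prod bm) (Sum.inr j) = (0, bm j) :=
      Prod.ext (Module.Basis.prod_apply_inr_fst _ _ _) (Module.Basis.prod_apply_inr_snd _ _ _)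
    rw [h1, Submodule.coe_prodEquivOfIsCompl']
    simp
  have hmemp : ∀ i, (bp i : V × Module.Dual ℝ V) ∈ Ep := fun i => (bp i).2
  have hmemm : ∀ j, (bm j : V × Module.Dual ℝ V) ∈ Em := fun j => (bm j).2
  have hrp : ∀ x y : Ep, (P.restrict Ep) x y = P x.1 y.1 := fun x y => rfl
  have hrm : ∀ x y : Em, (P.restrict Em) x y = P x.1 y.1 := fun x y => rfl
  -- values of P on the combined basis
  have hPorth : ∀ m n, m ≠ n → P (bE m) (bE n) = 0 := by
    rintro (i | i) (j | j) hne
    · rw [hbEl, hbEl]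
      exact hop i j (fun h => hne (by rw [h]))
    · rw [hbEl, hbEr]
      exact horthPM _ (hmemp i) _ (hmemm j)
    · rw [hbEr, hbEl, hPsymm]
      exact horthPM _ (hmemp j) _ (hmemm i)
    · rw [hbEr, hbEr]
      exact hom i j (fun h => hne (by rw [h]))
  -- the bilinear form A
  set AP : LinearMap.BilinForm ℝ (V × Module.Dual ℝ V) := P ∘ₗ U with hAPdef
  have hAeq : ∀ x y, AP x y = P (U x) y := fun x y => rfl
  have hUbp : ∀ i, U (bp i : V × Module.Dual ℝ V) = (bp i : V × Module.Dual ℝ V) :=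
    fun i => (memEp _).1 (hmemp i)
  have hUbm : ∀ j, U (bm j : V × Module.Dual ℝ V) = -(bm j : V × Module.Dual ℝ V) :=
    fun j => (memEm _).1 (hmemm j)
  have hAl : ∀ i y, AP (bE (Sum.inl i)) y = P (bE (Sum.inl i)) y := by
    intro i y
    rw [hAeq, hbEl, hUbp]
  have hAr : ∀ j y, AP (bE (Sum.inr j)) y = -P (bE (Sum.inr j)) y := by
    intro j y
    rw [hAeq, hbEr, hUbm, map_neg, LinearMap.neg_apply]
  have hAorth : ∀ m n, m ≠ n → AP (bE m) (bE n) = 0 := by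
    rintro (i | i) n hne
    · rw [hAl]
      exact hPorth _ _ hne
    · rw [hAr, hPorth _ _ hne, neg_zero]
  -- the canonical pairing has signature (d, d)
  have hsigP : HasSignature (fun x y : V × Module.Dual ℝ V => P x y) d d := by
    have bV : Module.Basis (Fin d) ℝ V := (Module.finBasis ℝ V).reindex (finCongr hdim)
    set c : Fin d → Module.Dual ℝ V := fun i => bV.dualBasis i with hc
    set b0 : Module.Basis (Fin d ⊕ Fin d) ℝ (V × Module.Dual ℝ V) := bV.prod bV.dualBasis with hb0
    set g : Fin d ⊕ Fin d → V × Module.Dual ℝ V :=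
      Sum.elim (fun i => b0 (Sum.inl i) + b0 (Sum.inr i))
        (fun i => b0 (Sum.inl i) - b0 (Sum.inr i)) with hg
    set T := b0.constr ℝ g with hT
    have hTb : ∀ k, T (b0 k) = g k := fun k => b0.constr_basis ℝ g k
    have hTT : ∀ k, T (T (b0 k)) = (2 : ℝ) • b0 k := by
      rintro (i | i)
      · rw [hTb]
        show T (b0 (Sum.inl i) + b0 (Sum.inr i)) = _
        rw [map_add, hTb, hTb]
        show (b0 (Sum.inl i) + b0 (Sum.inr i)) + (b0 (Sum.inl i) - b0 (Sum.inr i)) = _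
        rw [two_smul]
        abel
      · rw [hTb]
        show T (b0 (Sum.inl i) - b0 (Sum.inr i)) = _
        rw [map_sub, hTb, hTb]
        show (b0 (Sum.inl i) + b0 (Sum.inr i)) - (b0 (Sum.inl i) - b0 (Sum.inr i)) = _
        rw [two_smul]
        abel
    have h1 : T ∘ₗ ((1/2 : ℝ) • T) = LinearMap.id := by
      refine b0.ext fun k => ?_
      rw [LinearMap.comp_apply, LinearMap.smul_apply, map_smul, hTT, smul_smul,
        LinearMap.id_apply]
      norm_num
    have h2 : ((1/2 : ℝ) • T) ∘ₗ T = LinearMap.id := by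
      refine b0.ext fun k => ?_
      rw [LinearMap.comp_apply, LinearMap.smul_apply, hTT, smul_smul, LinearMap.id_apply]
      norm_num
    set bdd := b0.map (LinearEquiv.ofLinear T ((1/2 : ℝ) • T) h1 h2) with hbdd
    have hbddk : ∀ k, bdd k = g k := fun k => by
      rw [hbdd, Module.Basis.map_apply, LinearEquiv.ofLinear_apply]
      exact hTb k
    have hb0l : ∀ i, b0 (Sum.inl i) = (bV i, 0) := fun i =>
      Prod.ext (Module.Basis.prod_apply_inl_fst _ _ _) (Module.Basis.prod_apply_inl_snd _ _ _)
    have hb0r : ∀ i, b0 (Sum.inr i) = (0, c i) := fun i =>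
      Prod.ext (Module.Basis.prod_apply_inr_fst _ _ _) (Module.Basis.prod_apply_inr_snd _ _ _)
    have hgl : ∀ i, g (Sum.inl i) = (bV i, c i) := by
      intro i
      rw [hg, Sum.elim_inl, hb0l, hb0r, Prod.mk_add_mk, add_zero, zero_add]
    have hgr : ∀ i, g (Sum.inr i) = (bV i, -c i) := by
      intro i
      rw [hg, Sum.elim_inr, hb0l, hb0r, Prod.mk_sub_mk, sub_zero, zero_sub]
    have hcv : ∀ i j, c i (bV j) = if j = i then 1 else 0 := fun i j =>
      bV.dualBasis_apply_self i j
    have key := SigAux.hasSignature_of_basis (fun x y => P x y) bdd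
      (by
        rintro (i | i) (j | j) hne
        · have hij : i ≠ j := fun h => hne (by rw [h])
          rw [hbddk, hbddk, hgl, hgl]
          show c i (bV j) + c j (bV i) = 0
          rw [hcv, hcv, if_neg (fun h => hij h.symm), if_neg hij, add_zero]
        · rw [hbddk, hbddk, hgl, hgr]
          show c i (bV j) + (-c j) (bV i) = 0
          rw [LinearMap.neg_apply, hcv, hcv]
          rcases eq_or_ne i j with rfl | hij
          · simp
          · rw [if_neg (fun h => hij h.symm), if_neg hij]; ring
        · rw [hbddk, hbddk, hgr, hgl]
          show (-c i) (bV j) + c j (bV i) = 0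
          rw [LinearMap.neg_apply, hcv, hcv]
          rcases eq_or_ne i j with rfl | hij
          · simp
          · rw [if_neg (fun h => hij h.symm), if_neg hij]; ring
        · have hij : i ≠ j := fun h => hne (by rw [h])
          rw [hbddk, hbddk, hgr, hgr]
          show (-c i) (bV j) + (-c j) (bV i) = 0
          rw [LinearMap.neg_apply, LinearMap.neg_apply, hcv, hcv,
            if_neg (fun h => hij h.symm), if_neg hij]
          ring)
      (by
        intro i
        rw [hbddk, hgl]
        show (0:ℝ) < c i (bV i) + c i (bV i)
        rw [hcv, if_pos rfl]
        norm_num)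
      (by
        intro i
        rw [hbddk, hgr]
        show (-c i) (bV i) + (-c i) (bV i) < 0
        rw [LinearMap.neg_apply, hcv, if_pos rfl]
        norm_num)
    simpa using key
  -- signature of A
  have hsigA : HasSignature (fun x y : V × Module.Dual ℝ V => AP x y) (d + a) (d - a) :=
    SigAux.hasSignature_congr (fun x y => hP (U x) y) hsig
  -- decompose the signature of P along the eigenbasis
  set e1 : ((Fin p ⊕ Fin p') ⊕ (Fin q ⊕ Fin q')) ≃ ((Fin p ⊕ Fin q) ⊕ (Fin p' ⊕ Fin q')) :=
    { toFun := fun k => match k with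
        | Sum.inl (Sum.inl i) => Sum.inl (Sum.inl i)
        | Sum.inl (Sum.inr i) => Sum.inr (Sum.inl i)
        | Sum.inr (Sum.inl k) => Sum.inl (Sum.inr k)
        | Sum.inr (Sum.inr k) => Sum.inr (Sum.inr k)
      invFun := fun k => match k with
        | Sum.inl (Sum.inl i) => Sum.inl (Sum.inl i)
        | Sum.inl (Sum.inr k) => Sum.inr (Sum.inl k)
        | Sum.inr (Sum.inl i) => Sum.inl (Sum.inr i)
        | Sum.inr (Sum.inr k) => Sum.inr (Sum.inr k)
      left_inv := by rintro ((i | i) | (k | k)) <;> rfl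
      right_inv := by rintro ((i | k) | (i | k)) <;> rfl } with he1def
  set cP := bE.reindex e1.symm with hcPdef
  have hcP : ∀ k, cP k = bE (e1 k) := fun k => by
    rw [hcPdef, Module.Basis.reindex_apply, Equiv.symm_symm]
  have sigPE := SigAux.hasSignature_of_basis (fun x y => P x y) cP
    (by
      intro k l hne
      rw [hcP, hcP]
      exact hPorth _ _ (fun h => hne (e1.injective h)))
    (by
      rintro (i | i)
      · rw [hcP]
        have h : e1 (Sum.inl (Sum.inl i)) = Sum.inl (Sum.inl i) := rfl
        rw [h, hbEl]
        exact hpp i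
      · rw [hcP]
        have h : e1 (Sum.inl (Sum.inr i)) = Sum.inr (Sum.inl i) := rfl
        rw [h, hbEr]
        exact hpm i)
    (by
      rintro (k | k)
      · rw [hcP]
        have h : e1 (Sum.inr (Sum.inl k)) = Sum.inl (Sum.inr k) := rfl
        rw [h, hbEl]
        exact hnp k
      · rw [hcP]
        have h : e1 (Sum.inr (Sum.inr k)) = Sum.inr (Sum.inr k) := rfl
        rw [h, hbEr]
        exact hnm k)
  rw [Fintype.card_sum, Fintype.card_sum, Fintype.card_fin, Fintype.card_fin,
    Fintype.card_fin, Fintype.card_fin] at sigPE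
  -- decompose the signature of A along the eigenbasis
  set e2 : ((Fin p ⊕ Fin q') ⊕ (Fin q ⊕ Fin p')) ≃ ((Fin p ⊕ Fin q) ⊕ (Fin p' ⊕ Fin q')) :=
    { toFun := fun k => match k with
        | Sum.inl (Sum.inl i) => Sum.inl (Sum.inl i)
        | Sum.inl (Sum.inr k) => Sum.inr (Sum.inr k)
        | Sum.inr (Sum.inl j) => Sum.inl (Sum.inr j)
        | Sum.inr (Sum.inr i) => Sum.inr (Sum.inl i)
      invFun := fun k => match k with
        | Sum.inl (Sum.inl i) => Sum.inl (Sum.inl i)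
        | Sum.inl (Sum.inr j) => Sum.inr (Sum.inl j)
        | Sum.inr (Sum.inl i) => Sum.inr (Sum.inr i)
        | Sum.inr (Sum.inr k) => Sum.inl (Sum.inr k)
      left_inv := by rintro ((i | k) | (j | i)) <;> rfl
      right_inv := by rintro ((i | j) | (i | k)) <;> rfl } with he2def
  set cA := bE.reindex e2.symm with hcAdef
  have hcA : ∀ k, cA k = bE (e2 k) := fun k => by
    rw [hcAdef, Module.Basis.reindex_apply, Equiv.symm_symm]
  have sigAE := SigAux.hasSignature_of_basis (fun x y => AP x y) cA
    (by
      intro k l hne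
      rw [hcA, hcA]
      exact hAorth _ _ (fun h => hne (e2.injective h)))
    (by
      rintro (i | k)
      · rw [hcA]
        have h : e2 (Sum.inl (Sum.inl i)) = Sum.inl (Sum.inl i) := rfl
        beta_reduce
        rw [h, hAl, hbEl]
        exact hpp i
      · rw [hcA]
        have h : e2 (Sum.inl (Sum.inr k)) = Sum.inr (Sum.inr k) := rfl
        beta_reduce
        rw [h, hAr, hbEr]
        exact neg_pos.2 (hnm k))
    (by
      rintro (j | i)
      · rw [hcA]
        have h : e2 (Sum.inr (Sum.inl j)) = Sum.inl (Sum.inr j) := rfl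
        beta_reduce
        rw [h, hAl, hbEl]
        exact hnp j
      · rw [hcA]
        have h : e2 (Sum.inr (Sum.inr i)) = Sum.inr (Sum.inl i) := rfl
        beta_reduce
        rw [h, hAr, hbEr]
        exact neg_lt_zero.mpr (hpm i))
  rw [Fintype.card_sum, Fintype.card_sum, Fintype.card_fin, Fintype.card_fin,
    Fintype.card_fin, Fintype.card_fin] at sigAE
  obtain ⟨hPP, hQQ⟩ := SigAux.sylvester P sigPE hsigP
  obtain ⟨hAA, hBB⟩ := SigAux.sylvester AP sigAE hsigA
  refine ⟨p, q, ?_, ?_, ?_, ?_⟩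
  · refine ⟨bp, fun i j hij => ?_, fun i => ?_, fun j => ?_⟩
    · beta_reduce
      rw [hP]
      exact hop i j hij
    · beta_reduce
      rw [hP]
      exact hpp i
    · beta_reduce
      rw [hP]
      exact hnp j
  · omega
  · exact hpq
  · have hp'' : p' = d - p := by omega
    have hq'' : q' = d - q := by omega
    rw [← hp'', ← hq'']
    refine ⟨bm, fun i j hij => ?_, fun i => ?_, fun j => ?_⟩
    · beta_reduce
      rw [hP]
      exact hom i j hij
    · beta_reduce
      rw [hP]
      exact hpm i
    · beta_reduce
      rw [hP]
      exact hnm j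
end

section
/- Let U be an involution on E = V ⊕ V* self-adjoint for the canonical pairing, such that A(x,y) = ⟨Ux,y⟩ is positive definite. Then the (+1)-eigenspace of U equals graph(G + B) and the (−1)-eigenspace equals graph(−G + B) for a unique positive definite symmetric bilinear form G and antisymmetric bilinear form B on V (viewed as maps V → V*). -/
open LinearMap

private theorem graph_aux
    {V : Type*} [AddCommGroup V] [Module ℝ V] [FiniteDimensional ℝ V]
    (pair : (V × Module.Dual ℝ V) → (V × Module.Dual ℝ V) → ℝ)
    (hpair : ∀ x y, pair x y = x.2 y.1 + y.2 x.1)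
    (U : (V × Module.Dual ℝ V) →ₗ[ℝ] (V × Module.Dual ℝ V))
    (hinv : U ∘ₗ U = LinearMap.id)
    (hsa : ∀ x y, pair (U x) y = pair x (U y))
    (hpos : ∀ x, x ≠ 0 → 0 < pair (U x) x)
    (ε : ℝ) (hε : ε * ε = 1) :
    ∃ C : V →ₗ[ℝ] Module.Dual ℝ V,
      LinearMap.ker (U - ε • LinearMap.id) = LinearMap.graph C := by
  classical
  have hεne : ε ≠ 0 := by intro h; rw [h] at hε; norm_num at hε
  have hUU : ∀ x, U (U x) = x := fun x => by
    have := LinearMap.ext_iff.1 hinv x; simpa using this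
  set S := LinearMap.ker (U - ε • (LinearMap.id : (V × Module.Dual ℝ V) →ₗ[ℝ] _)) with hS
  have hmem : ∀ x, x ∈ S ↔ U x = ε • x := by
    intro x
    simp [hS, LinearMap.mem_ker, LinearMap.sub_apply, LinearMap.smul_apply, sub_eq_zero]
  -- scalar pull-out
  have hsm1 : ∀ (c : ℝ) a b, pair (c • a) b = c * pair a b := by
    intro c a b; simp [hpair, smul_eq_mul]; ring
  have hsm2 : ∀ (c : ℝ) a b, pair a (c • b) = c * pair a b := by
    intro c a b; simp [hpair, smul_eq_mul]; ring
  have hadd1 : ∀ a b c, pair (a + b) c = pair a c + pair b c := by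
    intro a b c; simp [hpair]; ring
  -- key nondegeneracy on eigenvectors
  have key : ∀ (δ : ℝ), δ * δ = 1 → ∀ x, U x = δ • x → pair x x = 0 → x = 0 := by
    intro δ hδ x hx hxx
    by_contra hx0
    have h1 := hpos x hx0
    rw [hx, hsm1, hxx, mul_zero] at h1
    exact lt_irrefl 0 h1
  -- the projection
  set p : S →ₗ[ℝ] V := (LinearMap.fst ℝ V (Module.Dual ℝ V)).comp S.subtype with hp
  have hinj : Function.Injective p := by
    intro a b hab
    have hab' : (a : V × Module.Dual ℝ V).1 = (b : V × Module.Dual ℝ V).1 := hab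
    have hsub : ((a - b : S) : V × Module.Dual ℝ V).1 = 0 := by
      rw [Submodule.coe_sub, Prod.fst_sub, hab', sub_self]
    have hxx : pair ((a - b : S) : V × Module.Dual ℝ V) ((a - b : S) : V × Module.Dual ℝ V) = 0 := by
      rw [hpair, hsub]; simp
    have h1 := key ε hε _ ((hmem _).1 (a - b).2) hxx
    have h2 : (a - b : S) = 0 := Subtype.ext h1
    exact sub_eq_zero.mp h2
  have hsurj : Function.Surjective p := by
    rw [← LinearMap.range_eq_top]
    by_contra hne
    have hne' : LinearMap.range p ≠ ⊤ := hne
    obtain ⟨v, -, hv⟩ := SetLike.exists_of_lt hne'.lt_top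
    obtain ⟨f, hf1, hf0⟩ := Submodule.exists_dual_map_eq_bot_of_notMem hv inferInstance
    set y : V × Module.Dual ℝ V := (0, f) with hy
    have hy0 : y ≠ 0 := by
      intro h
      apply hf1
      have : f = 0 := congrArg Prod.snd h
      simp [this]
    have hyS : ∀ x ∈ S, pair y x = 0 := by
      intro x hx
      have hxr : x.1 ∈ LinearMap.range p := ⟨⟨x, hx⟩, rfl⟩
      have hfx : f x.1 ∈ Submodule.map f (LinearMap.range p) := ⟨x.1, hxr, rfl⟩
      rw [hf0] at hfx
      have hfx0 : f x.1 = 0 := hfx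
      simp [hpair, hy, hfx0]
    set ys : V × Module.Dual ℝ V := ((1:ℝ)/2) • (y + ε • U y) with hys
    set yo : V × Module.Dual ℝ V := y - ys with hyo
    have hUys : U ys = ε • ys := by
      have h1 : U ys = ((1:ℝ)/2) • (U y + ε • y) := by
        rw [hys]; simp [map_smul, map_add, hUU]
      rw [h1, hys]
      match_scalars <;>
        first
          | ring1
          | linear_combination hε
          | linear_combination -hε
          | linear_combination ((1:ℝ)/2) * hε
          | linear_combination (-(1:ℝ)/2) * hε
    have hUyo : U yo = (-ε) • yo := by
      have h1 : U yo = U y - ε • ys := by rw [hyo]; simp [map_sub, hUys]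
      rw [h1, hyo, hys]
      match_scalars <;>
        first
          | ring1
          | linear_combination hε
          | linear_combination -hε
          | linear_combination ((1:ℝ)/2) * hε
          | linear_combination (-(1:ℝ)/2) * hε
    have horth : pair yo ys = 0 := by
      have h1 : -ε * pair yo ys = ε * pair yo ys := by
        rw [← hsm1, ← hsm2, ← hUyo, ← hUys]
        exact hsa yo ys
      have h2 : ε * pair yo ys = 0 := by linarith
      rcases mul_eq_zero.1 h2 with h | h
      · exact absurd h hεne
      · exact h
    have hysS : ys ∈ S := (hmem ys).2 hUys
    have hyss : pair ys ys = 0 := by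
      have hsum : ys + yo = y := by rw [hyo]; abel
      have h1 : pair y ys = 0 := hyS ys hysS
      rw [← hsum, hadd1, horth, add_zero] at h1
      exact h1
    have hys0 : ys = 0 := key ε hε ys hUys hyss
    have hyy : pair y y = 0 := by simp [hpair, hy]
    have hUy : U y = (-ε) • y := by
      have : yo = y := by rw [hyo, hys0, sub_zero]
      rw [← this] at hyy ⊢
      rw [hUyo]
    exact hy0 (key (-ε) (by rw [neg_mul_neg]; exact hε) y hUy hyy)
  -- build the equivalence and the map
  let e : S ≃ₗ[ℝ] V := LinearEquiv.ofBijective p ⟨hinj, hsurj⟩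
  refine ⟨(LinearMap.snd ℝ V (Module.Dual ℝ V)).comp (S.subtype.comp e.symm.toLinearMap), ?_⟩
  ext x
  rw [LinearMap.mem_graph_iff]
  constructor
  · intro hx
    have he : e ⟨x, hx⟩ = x.1 := LinearEquiv.ofBijective_apply ..
    have : e.symm x.1 = ⟨x, hx⟩ := by rw [← he, e.symm_apply_apply]
    simp [LinearMap.comp_apply, this]
  · intro hx
    have hz : ((e.symm x.1 : S) : V × Module.Dual ℝ V).1 = x.1 := by
      have : e (e.symm x.1) = x.1 := e.apply_symm_apply x.1
      exact this
    have hz2 : ((e.symm x.1 : S) : V × Module.Dual ℝ V).2 = x.2 := by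
      rw [hx]; rfl
    have : x = ((e.symm x.1 : S) : V × Module.Dual ℝ V) := Prod.ext hz.symm hz2.symm
    rw [this]
    exact (e.symm x.1).2



/-- Let `U` be an involution of `E = V × V*`, self-adjoint for the canonical pairing and
such that `A (x, y) = ⟨U x, y⟩` is positive definite.  Then there are a unique positive
definite symmetric `G : V → V*` and a unique antisymmetric `B : V → V*` such that the
`(+1)`-eigenspace of `U` is `graph (G + B)` and the `(-1)`-eigenspace is
`graph (-G + B)`. -/
theorem posdef_involution_eigenspaces_are_graphs
    (V : Type*) [AddCommGroup V] [Module ℝ V] [FiniteDimensional ℝ V]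
    (pair : (V × Module.Dual ℝ V) → (V × Module.Dual ℝ V) → ℝ)
    (hpair : ∀ x y, pair x y = x.2 y.1 + y.2 x.1)
    (U : (V × Module.Dual ℝ V) →ₗ[ℝ] (V × Module.Dual ℝ V))
    (hinv : U ∘ₗ U = LinearMap.id)
    (hsa : ∀ x y, pair (U x) y = pair x (U y))
    (hpos : ∀ x, x ≠ 0 → 0 < pair (U x) x) :
    ∃! GB : (V →ₗ[ℝ] Module.Dual ℝ V) × (V →ₗ[ℝ] Module.Dual ℝ V),
      (∀ v w, GB.1 v w = GB.1 w v) ∧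
      (∀ v : V, v ≠ 0 → 0 < GB.1 v v) ∧
      (∀ v w, GB.2 v w = -(GB.2 w v)) ∧
      LinearMap.ker (U - LinearMap.id) = LinearMap.graph (GB.1 + GB.2) ∧
      LinearMap.ker (U + LinearMap.id) = LinearMap.graph (-GB.1 + GB.2) := by
  classical
  obtain ⟨Cp, hCp⟩ := graph_aux pair hpair U hinv hsa hpos 1 (by norm_num)
  obtain ⟨Cm, hCm⟩ := graph_aux pair hpair U hinv hsa hpos (-1) (by norm_num)
  rw [one_smul] at hCp
  have hconv : U - (-1 : ℝ) • LinearMap.id = U + LinearMap.id := by module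
  rw [hconv] at hCm
  -- membership characterizations
  have hmemp : ∀ x, x ∈ LinearMap.ker (U - LinearMap.id) ↔ U x = x := by
    intro x
    simp [LinearMap.mem_ker, LinearMap.sub_apply, sub_eq_zero]
  have hmemm : ∀ x, x ∈ LinearMap.ker (U + LinearMap.id) ↔ U x = -x := by
    intro x
    simp [LinearMap.mem_ker, LinearMap.add_apply, add_eq_zero_iff_eq_neg]
  have hp : ∀ v : V, U (v, Cp v) = (v, Cp v) := by
    intro v
    have : (v, Cp v) ∈ LinearMap.graph Cp := by simp [LinearMap.mem_graph_iff]
    rw [← hCp] at this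
    exact (hmemp _).1 this
  have hm : ∀ w : V, U (w, Cm w) = -(w, Cm w) := by
    intro w
    have : (w, Cm w) ∈ LinearMap.graph Cm := by simp [LinearMap.mem_graph_iff]
    rw [← hCm] at this
    exact (hmemm _).1 this
  -- orthogonality: Cm w v = - Cp v w
  have horth : ∀ v w : V, Cm w v = -(Cp v w) := by
    intro v w
    have h1 := hsa (v, Cp v) (w, Cm w)
    rw [hp v, hm w] at h1
    have h2 : pair (v, Cp v) (-(w, Cm w)) = -pair (v, Cp v) (w, Cm w) := by
      simp [hpair]; ring
    rw [h2] at h1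
    have h3 : pair (v, Cp v) (w, Cm w) = 0 := by linarith
    rw [hpair] at h3
    simp only at h3
    linarith
  -- positivity of Cp on the diagonal
  have hppos : ∀ v : V, v ≠ 0 → 0 < Cp v v := by
    intro v hv
    have hne : ((v, Cp v) : V × Module.Dual ℝ V) ≠ 0 := by
      intro h
      exact hv (congrArg Prod.fst h)
    have := hpos _ hne
    rw [hp v, hpair] at this
    simp only at this
    linarith
  -- define G and B
  set G : V →ₗ[ℝ] Module.Dual ℝ V := ((1:ℝ)/2) • (Cp - Cm) with hG
  set B : V →ₗ[ℝ] Module.Dual ℝ V := ((1:ℝ)/2) • (Cp + Cm) with hB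
  have hGapp : ∀ v w, G v w = ((1:ℝ)/2) * (Cp v w - Cm v w) := by
    intro v w
    simp [hG, LinearMap.smul_apply, LinearMap.sub_apply, smul_eq_mul]
    try ring
  have hBapp : ∀ v w, B v w = ((1:ℝ)/2) * (Cp v w + Cm v w) := by
    intro v w
    simp [hB, LinearMap.smul_apply, LinearMap.add_apply, smul_eq_mul]
    try ring
  have hGB : G + B = Cp := by rw [hG, hB]; module
  have hGB' : -G + B = Cm := by rw [hG, hB]; module
  refine ⟨(G, B), ⟨?_, ?_, ?_, ?_, ?_⟩, ?_⟩
  · intro v w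
    rw [hGapp, hGapp, horth v w, horth w v]
    ring
  · intro v hv
    have h1 := hppos v hv
    have h2 := horth v v
    rw [hGapp]
    linarith
  · intro v w
    rw [hBapp, hBapp, horth v w, horth w v]
    ring
  · rw [hGB]; exact hCp
  · rw [hGB']; exact hCm
  · rintro ⟨G', B'⟩ ⟨-, -, -, hk1, hk2⟩
    have graph_inj : ∀ (f g : V →ₗ[ℝ] Module.Dual ℝ V),
        LinearMap.graph f = LinearMap.graph g → f = g := by
      intro f g h
      ext v w
      have hm1 : (v, f v) ∈ LinearMap.graph g := by
        rw [← h]; simp [LinearMap.mem_graph_iff]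
      have := ((LinearMap.mem_graph_iff g) _).1 hm1
      simp only at this
      rw [this]
    have e1 : G' + B' = G + B := by
      apply graph_inj
      rw [← hk1, hGB, hCp]
    have e2 : -G' + B' = -G + B := by
      apply graph_inj
      rw [← hk2, hGB', hCm]
    have eG : G' = G := by
      have h1 := LinearMap.ext_iff.1 e1
      have h2 := LinearMap.ext_iff.1 e2
      ext v w
      have h1' := LinearMap.ext_iff.1 (h1 v) w
      have h2' := LinearMap.ext_iff.1 (h2 v) w
      simp only [LinearMap.add_apply, LinearMap.neg_apply] at h1' h2'
      linarith
    have eB : B' = B := by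
      have h1 := LinearMap.ext_iff.1 e1
      have h2 := LinearMap.ext_iff.1 e2
      ext v w
      have h1' := LinearMap.ext_iff.1 (h1 v) w
      have h2' := LinearMap.ext_iff.1 (h2 v) w
      simp only [LinearMap.add_apply, LinearMap.neg_apply] at h1' h2'
      linarith
    rw [eG, eB]
end
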